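/- Under MAC, every Pareto optimal allocation value can be achieved by an allocation in which either (a) no good is split, or (b) exactly one good is split (among at most three players), or (c) exactly two goods are split, each between exactly two players. -/

import Mathlib

/-- An allocation matrix: nonnegative entries, columns summing to 1. -/
def IsAlloc {m : ℕ} (X : Fin 3 → Fin m → ℝ) : Prop :=
  (∀ i j, 0 ≤ X i j) ∧ ∀ j, ∑ i, X i j = 1

/-- Value vector of an allocation. -/
def payoff {m : ℕ} (a X : Fin 3 → Fin m → ℝ) : Fin 3 → ℝ :=
  fun i => ∑ j, a i j * X i j

/-- Good `j` is not split in `X`: every player gets share 0 or 1 of it. -/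
def Unsplit {m : ℕ} (X : Fin 3 → Fin m → ℝ) (j : Fin m) : Prop :=
  ∀ i, X i j = 0 ∨ X i j = 1

/-!
Among the allocations with the value vector of `X`, pick one, `Y`, with the fewest fractional
shares. No nonzero trade among the fractional shares of `Y` (zero column sums) can leave all
players but one indifferent: moving along it, or its opposite, until some share reaches `0`
either strictly benefits that player, against Pareto optimality, or keeps every value and
removes a fractional share, against minimality. Since all `a i j > 0`, such a trade exists when
two goods are split between the same two players (a swap) and when three goods are split around
the triangle of the three players (a cycle). Each split good is split between at least two
players, so at most two goods are split, and when two are, each between exactly two players.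
-/

open Finset

lemma fin_three_exists_ne_ne (p q : Fin 3) : ∃ r, r ≠ p ∧ r ≠ q := by
  revert p q; decide

lemma fin_three_eq_or_eq_or_eq {p q r : Fin 3} (hpq : p ≠ q) (hpr : p ≠ r) (hqr : q ≠ r)
    (x : Fin 3) : x = p ∨ x = q ∨ x = r := by
  revert p q r x; decide

section Trades

variable {ι κ : Type*}

def IsFractionalShare (Y : ι → κ → ℝ) (i : ι) (j : κ) : Prop :=
  0 < Y i j ∧ Y i j < 1

open Classical in
noncomputable def fractionalShares [Fintype ι] [Fintype κ] (Y : ι → κ → ℝ) : Finset (ι × κ) :=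
  univ.filter fun x => IsFractionalShare Y x.1 x.2

@[simp]
lemma mem_fractionalShares [Fintype ι] [Fintype κ] {Y : ι → κ → ℝ} {x : ι × κ} :
    x ∈ fractionalShares Y ↔ IsFractionalShare Y x.1 x.2 := by
  simp [fractionalShares]

def IsTrade [Fintype ι] (Y D : ι → κ → ℝ) : Prop :=
  (∀ j, ∑ i, D i j = 0) ∧ ∀ i j, D i j ≠ 0 → IsFractionalShare Y i j

def transfer [DecidableEq ι] [DecidableEq κ] (j : κ) (p q : ι) (c : ℝ) : ι → κ → ℝ :=
  fun i j' => if j' = j then (Pi.single q c - Pi.single p c : ι → ℝ) i else 0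

variable [Fintype ι] {Y D E : ι → κ → ℝ}

lemma IsTrade.add (hD : IsTrade Y D) (hE : IsTrade Y E) : IsTrade Y (D + E) := by
  refine ⟨fun j => by simp [sum_add_distrib, hD.1 j, hE.1 j], fun i j h => ?_⟩
  by_cases hDij : D i j = 0
  · exact hE.2 i j (by simpa [hDij] using h)
  · exact hD.2 i j hDij

lemma IsTrade.neg (hD : IsTrade Y D) : IsTrade Y (-D) :=
  ⟨fun j => by simp [hD.1 j], fun i j h => hD.2 i j (by simpa using h)⟩

lemma isTrade_transfer [DecidableEq ι] [DecidableEq κ] {j : κ} {p q : ι} (c : ℝ)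
    (hp : IsFractionalShare Y p j) (hq : IsFractionalShare Y q j) :
    IsTrade Y (transfer j p q c) := by
  refine ⟨fun j' => by simp [transfer, sum_sub_distrib], fun i j' h => ?_⟩
  simp only [transfer, Pi.sub_apply, Pi.single_apply] at h
  split_ifs at h <;> simp_all

lemma exists_neg_of_forall_sum_eq_zero (hD : ∀ j, ∑ i, D i j = 0) (hD0 : D ≠ 0) :
    ∃ i j, D i j < 0 := by
  by_contra! hnonneg
  exact hD0 <| funext fun i => funext fun j =>
    (sum_eq_zero_iff_of_nonneg fun i _ => hnonneg i j).1 (hD j) i (mem_univ i)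

end Trades

section Allocations

variable {m : ℕ} {a X Y D E : Fin 3 → Fin m → ℝ}

def ParetoOptimal (a X : Fin 3 → Fin m → ℝ) : Prop :=
  ¬ ∃ X' : Fin 3 → Fin m → ℝ, IsAlloc X' ∧
    (∀ i, payoff a X i ≤ payoff a X' i) ∧ ∃ i, payoff a X i < payoff a X' i

structure IsMinSplit (a Y : Fin 3 → Fin m → ℝ) : Prop where
  isAlloc : IsAlloc Y
  paretoOptimal : ParetoOptimal a Y
  card_le : ∀ Y', IsAlloc Y' → payoff a Y' = payoff a Y →
    (fractionalShares Y).card ≤ (fractionalShares Y').card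

lemma payoff_add : payoff a (D + E) = payoff a D + payoff a E := by
  funext i
  simp [payoff, mul_add, sum_add_distrib]

lemma payoff_smul (t : ℝ) : payoff a (t • D) = t • payoff a D := by
  funext i
  simp [payoff, mul_sum, mul_left_comm]

lemma payoff_neg : payoff a (-D) = -payoff a D := by
  funext i
  simp [payoff]

lemma payoff_transfer (j : Fin m) (p q : Fin 3) (c : ℝ) (i : Fin 3) :
    payoff a (transfer j p q c) i = a i j * (Pi.single q c - Pi.single p c : Fin 3 → ℝ) i := by
  simp [payoff, transfer, mul_ite]

lemma IsTrade.exists_fractionalShares_ssubset (hY : IsAlloc Y) (hD : IsTrade Y D)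
    (hD0 : D ≠ 0) : ∃ t : ℝ, 0 < t ∧ IsAlloc (Y + t • D) ∧
      fractionalShares (Y + t • D) ⊂ fractionalShares Y := by
  obtain ⟨i, j, hij⟩ := exists_neg_of_forall_sum_eq_zero hD.1 hD0
  set N := univ.filter fun x : Fin 3 × Fin m => D x.1 x.2 < 0
  -- the largest step that keeps every share nonnegative
  obtain ⟨x, hxN, hx⟩ := N.exists_min_image (fun x => Y x.1 x.2 / -D x.1 x.2)
    ⟨(i, j), by simp [N, hij]⟩
  have hDx : D x.1 x.2 < 0 := (mem_filter.1 hxN).2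
  have hYx := hD.2 x.1 x.2 hDx.ne
  set t := Y x.1 x.2 / -D x.1 x.2
  have ht : 0 < t := div_pos hYx.1 (neg_pos.2 hDx)
  refine ⟨t, ht, ⟨fun i j => ?_, fun j => ?_⟩, ?_⟩
  · simp only [Pi.add_apply, Pi.smul_apply, smul_eq_mul]
    rcases le_or_gt 0 (D i j) with h | h
    · exact add_nonneg (hY.1 i j) (mul_nonneg ht.le h)
    · have := hx (i, j) (by simp [N, h])
      rw [le_div_iff₀ (neg_pos.2 h)] at this
      linarith
  · simp [sum_add_distrib, ← mul_sum, hY.2 j, hD.1 j]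
  · rw [ssubset_iff_of_subset]
    · refine ⟨x, mem_fractionalShares.2 hYx, ?_⟩
      have htx : t * -D x.1 x.2 = Y x.1 x.2 := div_mul_cancel₀ _ (neg_pos.2 hDx).ne'
      have : Y x.1 x.2 + t * D x.1 x.2 = 0 := by linarith
      simp [IsFractionalShare, this]
    · intro y hy
      rw [mem_fractionalShares] at hy ⊢
      by_cases hDy : D y.1 y.2 = 0
      · simpa [IsFractionalShare, hDy] using hy
      · exact hD.2 _ _ hDy

lemma exists_isMinSplit (hX : IsAlloc X) (hPO : ParetoOptimal a X) :
    ∃ Y, payoff a Y = payoff a X ∧ IsMinSplit a Y := by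
  obtain ⟨Y, ⟨hY, hpay⟩, hmin⟩ := (measure fun Y : Fin 3 → Fin m → ℝ =>
    (fractionalShares Y).card).wf.has_min {Y | IsAlloc Y ∧ payoff a Y = payoff a X} ⟨X, hX, rfl⟩
  refine ⟨Y, hpay, hY, by rwa [ParetoOptimal, hpay], fun Y' hY' hpay' => ?_⟩
  exact not_lt.1 (hmin Y' ⟨hY', hpay'.trans hpay⟩)

lemma IsMinSplit.trade_eq_zero (hY : IsMinSplit a Y) (hD : IsTrade Y D) (i₀ : Fin 3)
    (hgain : ∀ i ≠ i₀, payoff a D i = 0) : D = 0 := by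
  wlog hpos : 0 ≤ payoff a D i₀ generalizing D
  · exact neg_eq_zero.1 (this hD.neg (fun i hi => by simp [payoff_neg, hgain i hi])
      (by simp only [payoff_neg, Pi.neg_apply]; linarith))
  by_contra hD0
  obtain ⟨t, ht, hY', hsub⟩ := hD.exists_fractionalShares_ssubset hY.isAlloc hD0
  rcases hpos.eq_or_lt with h0 | hlt
  · have hD' : payoff a D = 0 :=
      funext fun i => if hi : i = i₀ then hi ▸ h0.symm else hgain i hi
    have hpay : payoff a (Y + t • D) = payoff a Y := by simp [payoff_add, payoff_smul, hD']
    exact (card_lt_card hsub).not_ge (hY.card_le _ hY' hpay)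
  · have hpay : ∀ i, payoff a (Y + t • D) i = payoff a Y i + t * payoff a D i := by
      simp [payoff_add, payoff_smul]
    refine hY.paretoOptimal ⟨_, hY', fun i => ?_, i₀, ?_⟩ <;> rw [hpay]
    · by_cases hi : i = i₀
      · subst hi; nlinarith
      · simp [hgain i hi]
    · nlinarith

lemma IsAlloc.exists_forall_ne_isFractionalShare (hY : IsAlloc Y) {j : Fin m}
    (hj : ¬ Unsplit Y j) : ∃ o, ∀ i ≠ o, IsFractionalShare Y i j := by
  obtain ⟨p, hp0, hp1⟩ : ∃ p, Y p j ≠ 0 ∧ Y p j ≠ 1 := by simpa [Unsplit, not_or] using hj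
  have hp : 0 < Y p j := (hY.1 p j).lt_of_ne' hp0
  obtain ⟨q, hqp, hq⟩ : ∃ q ≠ p, 0 < Y q j := by
    by_contra! h
    refine hp1 ?_
    rw [← hY.2 j, sum_eq_single p (fun q _ hq => (h q hq).antisymm (hY.1 q j)) (by simp)]
  have hsum : Y q j + Y p j ≤ 1 :=
    hY.2 j ▸ add_le_sum (fun i _ => hY.1 i j) (mem_univ q) (mem_univ p) hqp
  obtain ⟨o, hoq, hop⟩ := fin_three_exists_ne_ne q p
  refine ⟨o, fun i hi => ?_⟩
  rcases fin_three_eq_or_eq_or_eq hqp hoq.symm hop.symm i with rfl | rfl | rfl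
  · exact ⟨hq, by linarith⟩
  · exact ⟨hp, by linarith⟩
  · exact absurd rfl hi

lemma IsMinSplit.ne_of_forall_ne_isFractionalShare (ha : ∀ i j, 0 < a i j)
    (hY : IsMinSplit a Y) {j k : Fin m} (hjk : j ≠ k) {o o' : Fin 3}
    (hj : ∀ i ≠ o, IsFractionalShare Y i j) (hk : ∀ i ≠ o', IsFractionalShare Y i k) : o ≠ o' := by
  rintro rfl
  obtain ⟨p, hpo, -⟩ := fin_three_exists_ne_ne o o
  obtain ⟨q, hqo, hqp⟩ := fin_three_exists_ne_ne o p
  -- `p` swaps `a p k` of good `j` for `a p j` of good `k` with `q`, which leaves `p` indifferent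
  set D := transfer j p q (a p k) + transfer k q p (a p j)
  have hD : IsTrade Y D := (isTrade_transfer _ (hj p hpo) (hj q hqo)).add
    (isTrade_transfer _ (hk q hqo) (hk p hpo))
  have hgain : ∀ i ≠ q, payoff a D i = 0 := by
    intro i hiq
    by_cases hip : i = p
    · subst hip; simp [D, payoff_add, payoff_transfer, hiq]; ring
    · simp [D, payoff_add, payoff_transfer, hip, hiq]
  have hDpj := congr_fun₂ (hY.trade_eq_zero hD q hgain) p j
  simp [D, transfer, hjk, hqp, (ha p k).ne'] at hDpj

lemma IsMinSplit.false_of_cycle (ha : ∀ i j, 0 < a i j) (hY : IsMinSplit a Y)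
    {j k l : Fin m} (hjk : j ≠ k) (hjl : j ≠ l) {p q r : Fin 3} (hpq : p ≠ q) (hpr : p ≠ r)
    (hqr : q ≠ r) (hpj : IsFractionalShare Y p j) (hqj : IsFractionalShare Y q j)
    (hqk : IsFractionalShare Y q k) (hrk : IsFractionalShare Y r k)
    (hrl : IsFractionalShare Y r l) (hpl : IsFractionalShare Y p l) : False := by
  -- `j` goes from `p` to `q`, `k` from `q` to `r` and `l` from `r` to `p`, in amounts
  -- that leave `q` and `r` indifferent
  set D := transfer j p q (a q k * a r l) + transfer k q r (a q j * a r l) +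
    transfer l r p (a q j * a r k)
  have hD : IsTrade Y D := ((isTrade_transfer _ hpj hqj).add (isTrade_transfer _ hqk hrk)).add
    (isTrade_transfer _ hrl hpl)
  have hgain : ∀ i ≠ p, payoff a D i = 0 := by
    intro i hip
    rcases fin_three_eq_or_eq_or_eq hpq hpr hqr i with rfl | rfl | rfl
    · exact absurd rfl hip
    · simp [D, payoff_add, payoff_transfer, hpq.symm, hqr]; ring
    · simp [D, payoff_add, payoff_transfer, hpr.symm, hqr.symm]; ring
  have hDpj := congr_fun₂ (hY.trade_eq_zero hD p hgain) p j
  simp [D, transfer, hjk, hjl, hpq, (ha q k).ne', (ha r l).ne'] at hDpj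

lemma IsMinSplit.false_of_three_not_unsplit (ha : ∀ i j, 0 < a i j) (hY : IsMinSplit a Y)
    {j₀ j₁ j₂ : Fin m} (h01 : j₀ ≠ j₁) (h02 : j₀ ≠ j₂) (h12 : j₁ ≠ j₂) (hs₀ : ¬ Unsplit Y j₀)
    (hs₁ : ¬ Unsplit Y j₁) (hs₂ : ¬ Unsplit Y j₂) : False := by
  obtain ⟨o₀, h₀⟩ := hY.isAlloc.exists_forall_ne_isFractionalShare hs₀
  obtain ⟨o₁, h₁⟩ := hY.isAlloc.exists_forall_ne_isFractionalShare hs₁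
  obtain ⟨o₂, h₂⟩ := hY.isAlloc.exists_forall_ne_isFractionalShare hs₂
  have n01 := hY.ne_of_forall_ne_isFractionalShare ha h01 h₀ h₁
  have n02 := hY.ne_of_forall_ne_isFractionalShare ha h02 h₀ h₂
  have n12 := hY.ne_of_forall_ne_isFractionalShare ha h12 h₁ h₂
  exact hY.false_of_cycle ha h01 h02 n12 n01.symm n02.symm (h₀ o₁ n01.symm) (h₀ o₂ n02.symm)
    (h₁ o₂ n12.symm) (h₁ o₀ n01) (h₂ o₀ n02) (h₂ o₁ n12)

lemma IsMinSplit.ncard_isFractionalShare_le_two (ha : ∀ i j, 0 < a i j) (hY : IsMinSplit a Y)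
    {j k : Fin m} (hjk : j ≠ k) (hk : ¬ Unsplit Y k) :
    {i | IsFractionalShare Y i j}.ncard ≤ 2 := by
  obtain ⟨o, ho⟩ := hY.isAlloc.exists_forall_ne_isFractionalShare hk
  have hne : {i | IsFractionalShare Y i j} ≠ Set.univ := fun h =>
    hY.ne_of_forall_ne_isFractionalShare ha hjk (fun i _ => Set.eq_univ_iff_forall.1 h i) ho rfl
  exact Nat.le_of_lt_succ (by simpa using Set.ncard_lt_ncard (Set.ssubset_univ_iff.2 hne))

end Allocations

theorem pareto_optimal_few_splits_general (m : ℕ) (a : Fin 3 → Fin m → ℝ)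
    (ha : ∀ i j, 0 < a i j)
    (X : Fin 3 → Fin m → ℝ) (hX : IsAlloc X)
    (hPO : ¬ ∃ X' : Fin 3 → Fin m → ℝ, IsAlloc X' ∧
      (∀ i, payoff a X i ≤ payoff a X' i) ∧ ∃ i, payoff a X i < payoff a X' i) :
    ∃ X' : Fin 3 → Fin m → ℝ, IsAlloc X' ∧ payoff a X' = payoff a X ∧
      ( -- (a) no good is split
        (∀ j, Unsplit X' j) ∨
        -- (b) at most one good is split (among at most three players)
        (∃ j0, ∀ j, j ≠ j0 → Unsplit X' j) ∨
        -- (c) two goods are split, each between at most two players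
        (∃ j0 j1, j0 ≠ j1 ∧ (∀ j, j ≠ j0 → j ≠ j1 → Unsplit X' j) ∧
          ∀ j, (j = j0 ∨ j = j1) →
            {i : Fin 3 | 0 < X' i j ∧ X' i j < 1}.ncard ≤ 2)) := by
  obtain ⟨Y, hpay, hY⟩ := exists_isMinSplit hX hPO
  refine ⟨Y, hY.isAlloc, hpay, ?_⟩
  by_cases hA : ∀ j, Unsplit Y j
  · exact Or.inl hA
  obtain ⟨j₀, hj₀⟩ := not_forall.1 hA
  by_cases hB : ∀ j, j ≠ j₀ → Unsplit Y j
  · exact Or.inr (Or.inl ⟨j₀, hB⟩)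
  obtain ⟨j₁, hj₁₀, hj₁⟩ : ∃ j ≠ j₀, ¬ Unsplit Y j := by simpa using hB
  refine Or.inr (Or.inr ⟨j₀, j₁, hj₁₀.symm, fun j hj0 hj1 => ?_, ?_⟩)
  · by_contra hj
    exact hY.false_of_three_not_unsplit ha hj₁₀.symm (Ne.symm hj0) (Ne.symm hj1) hj₀ hj₁ hj
  · rintro j (rfl | rfl)
    · exact hY.ncard_isFractionalShare_le_two ha hj₁₀.symm hj₁
    · exact hY.ncard_isFractionalShare_le_two ha hj₁₀ hj₀

theorem pareto_optimal_few_splits (m : ℕ) (a : Fin 3 → Fin m → ℝ)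
    (ha : ∀ i j, 0 < a i j) (hrow : ∀ i, ∑ j, a i j = 1)
    (X : Fin 3 → Fin m → ℝ) (hX : IsAlloc X)
    (hPO : ¬ ∃ X' : Fin 3 → Fin m → ℝ, IsAlloc X' ∧
      (∀ i, payoff a X i ≤ payoff a X' i) ∧ ∃ i, payoff a X i < payoff a X' i) :
    ∃ X' : Fin 3 → Fin m → ℝ, IsAlloc X' ∧ payoff a X' = payoff a X ∧
      ( -- (a) no good is split
        (∀ j, Unsplit X' j) ∨
        -- (b) at most one good is split (among at most three players)
        (∃ j0, ∀ j, j ≠ j0 → Unsplit X' j) ∨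
        -- (c) two goods are split, each between at most two players
        (∃ j0 j1, j0 ≠ j1 ∧ (∀ j, j ≠ j0 → j ≠ j1 → Unsplit X' j) ∧
          ∀ j, (j = j0 ∨ j = j1) →
            {i : Fin 3 | 0 < X' i j ∧ X' i j < 1}.ncard ≤ 2)) :=
  pareto_optimal_few_splits_general m a ha X hX hPO
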